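/- arXiv:2603.25055 — 4 statements merged into one kernel-verified Lean document; each statement's English description precedes it below -/
import Mathlib

section
/- Let (X_1,Y_1),...,(X_n,Y_n) be independent random vectors with absolutely continuous bivariate distribution functions F_1,...,F_n and density functions f_1,...,f_n. Then the expected value of the rank Kendall correlation coefficient equals the theoretical Kendall correlation coefficient: E[τ̃_n] = τ_n. -/
open MeasureTheory ProbabilityTheory

/-!
Relabelling the pairs through the sorting permutation `σ ω` turns the number of concordant
pairs `j < i` of concomitants into the number of pairs `(i, j)` with `X_j < X_i` and
`Y_j ≤ Y_i`, in the original labelling. By linearity its expectation is the sum of the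
probabilities of these events. Since `σ` sorts the `X`-sample strictly almost surely, ties
`X_j = X_i` with `j ≠ i` are null, so `<` may be replaced by `≤`.
-/

section Concomitants

variable {ι α : Type*} [LinearOrder ι] [Preorder α]

theorem injective_of_strictMono_comp_perm {σ : Equiv.Perm ι} {x : ι → α}
    (hx : StrictMono fun k => x (σ k)) : Function.Injective x := by
  simpa [Function.comp_def] using hx.injective.comp σ.symm.injective

theorem sum_sum_ite_lt_concomitant_eq {β M : Type*} [Fintype ι] [DecidableLT α] [LE β]
    [DecidableLE β] [AddCommMonoid M] {σ : Equiv.Perm ι} {x : ι → α}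
    (hx : StrictMono fun k => x (σ k)) (y : ι → β) (c : M) :
    ∑ i, ∑ j, (if j < i ∧ y (σ j) ≤ y (σ i) then c else 0)
      = ∑ i, ∑ j, if x j < x i ∧ y j ≤ y i then c else 0 := by
  simp only [← Fintype.sum_prod_type']
  exact Fintype.sum_equiv (σ.prodCongr σ) _ _ fun p => by simp [hx.lt_iff_lt]

end Concomitants

section Indicators

variable {Ω ι κ : Type*}

theorem ite_one_zero_eq_indicator (p : Ω → Prop) [DecidablePred p] :
    (fun ω => if p ω then (1 : ℝ) else 0) = {ω | p ω}.indicator 1 :=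
  funext fun ω => by simp [Set.indicator_apply]

variable [MeasurableSpace Ω] {μ : Measure Ω}

theorem integrable_ite_one [IsFiniteMeasure μ] {p : Ω → Prop} [DecidablePred p]
    (hp : MeasurableSet {ω | p ω}) : Integrable (fun ω => if p ω then (1 : ℝ) else 0) μ := by
  rw [ite_one_zero_eq_indicator]
  exact (integrable_const 1).indicator hp

theorem integral_ite_one {p : Ω → Prop} [DecidablePred p] (hp : MeasurableSet {ω | p ω}) :
    ∫ ω, (if p ω then (1 : ℝ) else 0) ∂μ = μ.real {ω | p ω} := by
  rw [ite_one_zero_eq_indicator, integral_indicator_one hp]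

theorem integral_sum_sum_ite_one [Fintype ι] [Fintype κ] [IsFiniteMeasure μ]
    {p : ι → κ → Ω → Prop} [∀ i j, DecidablePred (p i j)]
    (hp : ∀ i j, MeasurableSet {ω | p i j ω}) :
    ∫ ω, ∑ i, ∑ j, (if p i j ω then (1 : ℝ) else 0) ∂μ = ∑ i, ∑ j, μ.real {ω | p i j ω} := by
  rw [integral_finsetSum _ fun i _ => integrable_finsetSum _ fun j _ => integrable_ite_one (hp i j)]
  refine Finset.sum_congr rfl fun i _ => ?_
  rw [integral_finsetSum _ fun j _ => integrable_ite_one (hp i j)]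
  exact Finset.sum_congr rfl fun j _ => integral_ite_one (hp i j)

theorem measure_lt_and_eq_measure_le_and {α : Type*} [PartialOrder α] {a b : Ω → α}
    (hab : ∀ᵐ ω ∂μ, a ω ≠ b ω) (q : Ω → Prop) :
    μ {ω | a ω < b ω ∧ q ω} = μ {ω | a ω ≤ b ω ∧ q ω} := by
  refine measure_congr ?_
  filter_upwards [hab] with ω hω
  exact propext (and_congr_left' ⟨le_of_lt, fun h => h.lt_of_ne hω⟩)

end Indicators

theorem expectation_rank_kendall_eq_theoretical_kendall_general
    {Ω : Type*} [MeasureSpace Ω] [IsProbabilityMeasure (ℙ : Measure Ω)]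
    (n : ℕ)
    (X Y : Fin n → Ω → ℝ)
    (hXY : ∀ i, Measurable fun ω => (X i ω, Y i ω))
    (σ : Ω → Equiv.Perm (Fin n))
    (hσ : ∀ᵐ ω ∂ℙ, StrictMono fun j : Fin n => X (σ ω j) ω) :
    ∫ ω, (4 * (∑ i : Fin n, ∑ j : Fin n,
          if j < i ∧ Y (σ ω j) ω ≤ Y (σ ω i) ω then (1 : ℝ) else 0)
        / (n * (n - 1)) - 1) ∂ℙ
      = 4 * (∑ i : Fin n, ∑ j : Fin n,
          if j ≠ i then (ℙ {ω | X j ω ≤ X i ω ∧ Y j ω ≤ Y i ω}).toReal else 0)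
        / (n * (n - 1)) - 1 := by
  set N : Ω → ℝ := fun ω => ∑ i, ∑ j, if X j ω < X i ω ∧ Y j ω ≤ Y i ω then 1 else 0
  have hX : ∀ i, Measurable (X i) := fun i => measurable_fst.comp (hXY i)
  have hY : ∀ i, Measurable (Y i) := fun i => measurable_snd.comp (hXY i)
  have hmeas : ∀ i j, MeasurableSet {ω | X j ω < X i ω ∧ Y j ω ≤ Y i ω} := fun i j =>
    (measurableSet_lt (hX j) (hX i)).inter (measurableSet_le (hY j) (hY i))
  have hN : Integrable N ℙ :=
    integrable_finsetSum _ fun i _ => integrable_finsetSum _ fun j _ => integrable_ite_one (hmeas i j)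
  have hties : ∀ i j, j ≠ i → ∀ᵐ ω ∂ℙ, X j ω ≠ X i ω := fun i j hij => by
    filter_upwards [hσ] with ω hω
    exact (injective_of_strictMono_comp_perm (x := fun j => X j ω) hω).ne hij
  calc _ = ∫ ω, (4 * N ω / (n * (n - 1)) - 1) ∂ℙ :=
        integral_congr_ae <| hσ.mono fun ω hω => congrArg (fun s : ℝ => 4 * s / (n * (n - 1)) - 1)
          (sum_sum_ite_lt_concomitant_eq (x := fun j => X j ω) hω (fun j => Y j ω) 1)
    _ = 4 * (∫ ω, N ω ∂ℙ) / (n * (n - 1)) - 1 := by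
        rw [integral_sub ((hN.const_mul 4).div_const _) (integrable_const 1), integral_div,
          integral_const_mul, integral_const]
        simp
    _ = _ := by
        rw [integral_sum_sum_ite_one hmeas]
        congr 3
        refine Finset.sum_congr rfl fun i _ => Finset.sum_congr rfl fun j _ => ?_
        split_ifs with hij
        · rw [Measure.real, measure_lt_and_eq_measure_le_and (hties i j hij)]
        · obtain rfl := not_not.1 hij
          simp

/-- For independent random vectors `(X_1,Y_1), …, (X_n,Y_n)` with absolutely
continuous bivariate distributions (given by densities `f i` with respect to Lebesgue measure
on `ℝ²`), the expected value of the rank Kendall correlation coefficient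
`τ̃_n = 4 ∑_{j<i} I(Y_{j,n} ≤ Y_{i,n}) / (n(n-1)) - 1` (built from the concomitants of the
order statistics of the `X`-sample, encoded by an a.s. sorting permutation `σ ω`) equals the
theoretical Kendall correlation coefficient
`τ_n = 4 ∑_{i≠j} P(X_j ≤ X_i, Y_j ≤ Y_i) / (n(n-1)) - 1`. -/
theorem expectation_rank_kendall_eq_theoretical_kendall
    {Ω : Type*} [MeasureSpace Ω] [IsProbabilityMeasure (ℙ : Measure Ω)]
    (n : ℕ) (hn : 2 ≤ n)
    (X Y : Fin n → Ω → ℝ)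
    (hXY : ∀ i, Measurable fun ω => (X i ω, Y i ω))
    (hindep : iIndepFun (fun i ω => (X i ω, Y i ω)) ℙ)
    (f : Fin n → ℝ × ℝ → ℝ)
    (hf_meas : ∀ i, Measurable (f i))
    (hf_nonneg : ∀ i p, 0 ≤ f i p)
    (hlaw : ∀ i, Measure.map (fun ω => (X i ω, Y i ω)) ℙ
        = (volume : Measure (ℝ × ℝ)).withDensity fun p => ENNReal.ofReal (f i p))
    (σ : Ω → Equiv.Perm (Fin n))
    (hσ : ∀ᵐ ω ∂ℙ, StrictMono fun j : Fin n => X (σ ω j) ω) :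
    ∫ ω, (4 * (∑ i : Fin n, ∑ j : Fin n,
          if j < i ∧ Y (σ ω j) ω ≤ Y (σ ω i) ω then (1 : ℝ) else 0)
        / (n * (n - 1)) - 1) ∂ℙ
      = 4 * (∑ i : Fin n, ∑ j : Fin n,
          if j ≠ i then (ℙ {ω | X j ω ≤ X i ω ∧ Y j ω ≤ Y i ω}).toReal else 0)
        / (n * (n - 1)) - 1 :=
  expectation_rank_kendall_eq_theoretical_kendall_general n X Y hXY σ hσ
end

section
/- Let (X_i,Y_i), i ≥ 1, be a sequence of independent random vectors with absolutely continuous bivariate distribution functions F_i, and let τ = lim_{n→∞} τ_n (which exists). Then the rank Kendall correlation coefficient converges in probability to τ: τ̃_n →^p τ as n → ∞, i.e., for every ε > 0, P(|τ̃_n − τ| > ε) → 0. -/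
/-!
After sorting by `X`, the numerator of `τ̃_n` counts the ordered pairs `(a, b)` of distinct
indices below `n` with `X_a < X_b` and `Y_a ≤ Y_b`: a sum `T_n` of indicators, each a function of
the pair of vectors `((X_a, Y_a), (X_b, Y_b))`. The `X_i` are independent and atomless, so ties have
probability zero and `E T_n` is the numerator of `τ_n`. Two of the indicators are independent
unless their pairs share an index, hence `Var T_n ≤ 4 n³ = o((n (n - 1))²)`, and Chebyshev's
inequality gives the convergence in probability.
-/

open MeasureTheory ProbabilityTheory Filter Topology Finset

lemma Finset.sum_offDiag_eq_sum_sum {α M : Type*} [DecidableEq α] [AddCommMonoid M]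
    {s : Finset α} {g : α → α → M} (hg : ∀ a ∈ s, g a a = 0) :
    ∑ p ∈ s.offDiag, g p.1 p.2 = ∑ a ∈ s, ∑ b ∈ s, g a b := by
  rw [← sum_product']
  refine sum_subset (fun p hp => mem_product.2 ⟨(mem_offDiag.1 hp).1, (mem_offDiag.1 hp).2.1⟩)
    fun p hp hp' => ?_
  obtain ⟨ha, hb⟩ := mem_product.1 hp
  have hdiag : p.1 = p.2 := by by_contra hne; exact hp' (mem_offDiag.2 ⟨ha, hb, hne⟩)
  rw [← hdiag]
  exact hg _ ha

lemma Finset.card_filter_offDiag_meets_le {α : Type*} [DecidableEq α] (s : Finset α)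
    (p : α × α) :
    #{q ∈ s.offDiag | p.1 = q.1 ∨ p.1 = q.2 ∨ p.2 = q.1 ∨ p.2 = q.2} ≤ 4 * #s := by
  have hsub : {q ∈ s.offDiag | p.1 = q.1 ∨ p.1 = q.2 ∨ p.2 = q.1 ∨ p.2 = q.2}
      ⊆ {p.1, p.2} ×ˢ s ∪ s ×ˢ {p.1, p.2} := by
    intro q hq
    simp only [mem_filter, mem_offDiag] at hq
    simp only [mem_union, mem_product, mem_insert, mem_singleton]
    grind
  have hpair : #{p.1, p.2} ≤ 2 := card_le_two
  calc #{q ∈ s.offDiag | p.1 = q.1 ∨ p.1 = q.2 ∨ p.2 = q.1 ∨ p.2 = q.2}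
      ≤ #({p.1, p.2} ×ˢ s) + #(s ×ˢ {p.1, p.2}) := (card_le_card hsub).trans (card_union_le _ _)
    _ ≤ 4 * #s := by rw [card_product, card_product]; nlinarith

lemma sum_ite_lt_perm_eq_sum_offDiag {n : ℕ} (x y : ℕ → ℝ) (π : Equiv.Perm (Fin n))
    (hπ : StrictMono fun k => x (π k)) :
    (∑ i : Fin n, ∑ j : Fin n, if j < i ∧ y (π j) ≤ y (π i) then (1 : ℝ) else 0)
      = ∑ p ∈ (range n).offDiag, if x p.1 < x p.2 ∧ y p.1 ≤ y p.2 then 1 else 0 := by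
  set g : ℕ → ℕ → ℝ := fun a b => if x a < x b ∧ y a ≤ y b then 1 else 0
  calc (∑ i : Fin n, ∑ j : Fin n, if j < i ∧ y (π j) ≤ y (π i) then (1 : ℝ) else 0)
      = ∑ i : Fin n, ∑ j : Fin n, g (π j) (π i) :=
        sum_congr rfl fun i _ => sum_congr rfl fun j _ => by simp only [g, hπ.lt_iff_lt]
    _ = ∑ i : Fin n, ∑ j : Fin n, g j i := by
        rw [Equiv.sum_comp π fun i : Fin n => ∑ j : Fin n, g (π j) i]
        exact sum_congr rfl fun i _ => Equiv.sum_comp π fun j : Fin n => g j i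
    _ = ∑ i ∈ range n, ∑ j ∈ range n, g j i := by
        rw [← Fin.sum_univ_eq_sum_range (fun i => ∑ j ∈ range n, g j i)]
        exact sum_congr rfl fun i _ => Fin.sum_univ_eq_sum_range (fun j => g j i) n
    _ = ∑ p ∈ (range n).offDiag, g p.1 p.2 := by
        rw [sum_comm, sum_offDiag_eq_sum_sum fun a _ => by simp [g]]

namespace ProbabilityTheory

section Dependence

variable {Ω : Type*} {mΩ : MeasurableSpace Ω} {μ : Measure Ω}

lemma nullSingletonClass_map_of_map_prodMk_absolutelyContinuous {α β : Type*} [MeasurableSpace α]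
    [MeasurableSingletonClass α] [MeasurableSpace β] {ν₁ : Measure α} {ν₂ : Measure β}
    [NullSingletonClass ν₁] [SFinite ν₂] {U : Ω → α} {V : Ω → β}
    (hUV : Measurable fun ω => (U ω, V ω)) (hac : μ.map (fun ω => (U ω, V ω)) ≪ ν₁.prod ν₂) :
    NullSingletonClass (μ.map U) := by
  refine ⟨fun x => ?_⟩
  have hx : MeasurableSet ({x} ×ˢ Set.univ : Set (α × β)) :=
    (measurableSet_singleton x).prod MeasurableSet.univ
  have hU : Measurable U := measurable_fst.comp hUV
  rw [Measure.map_apply hU (measurableSet_singleton x)]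
  have := hac (by rw [Measure.prod_prod, measure_singleton, zero_mul] :
    ν₁.prod ν₂ ({x} ×ˢ Set.univ) = 0)
  rwa [Measure.map_apply hUV hx, Set.mk_preimage_prod, Set.preimage_univ,
    Set.inter_univ] at this

lemma IndepFun.measure_eq_eq_zero {α : Type*} [MeasurableSpace α] [MeasurableEq α]
    [IsFiniteMeasure μ] {U V : Ω → α} (hU : Measurable U) (hV : Measurable V)
    (hUV : IndepFun U V μ) [NullSingletonClass (μ.map V)] :
    μ {ω | U ω = V ω} = 0 := by
  have hdiag : MeasurableSet (Set.diagonal α) := measurableSet_diagonal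
  calc μ {ω | U ω = V ω} = μ.map (fun ω => (U ω, V ω)) (Set.diagonal α) := by
        rw [Measure.map_apply (hU.prodMk hV) hdiag]; rfl
    _ = (μ.map U).prod (μ.map V) (Set.diagonal α) := by
        rw [(indepFun_iff_map_prod_eq_prod_map_map hU.aemeasurable hV.aemeasurable).1 hUV]
    _ = 0 := by
        have hsection : ∀ x, Prod.mk x ⁻¹' Set.diagonal α = {x} := fun x => by
          ext y; simp [eq_comm]
        simp [Measure.prod_apply hdiag, hsection]

lemma covariance_le_one_of_mem_Icc [IsProbabilityMeasure μ] {U V : Ω → ℝ}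
    (hU : Measurable U) (hV : Measurable V) (hU01 : ∀ ω, U ω ∈ Set.Icc 0 1)
    (hV01 : ∀ ω, V ω ∈ Set.Icc 0 1) :
    cov[U, V; μ] ≤ 1 := by
  rw [covariance_eq_sub (memLp_of_bounded (ae_of_all _ hU01) hU.aestronglyMeasurable 2)
    (memLp_of_bounded (ae_of_all _ hV01) hV.aestronglyMeasurable 2)]
  have hUV : μ[U * V] ≤ 1 := calc
    μ[U * V] ≤ ∫ _, (1 : ℝ) ∂μ := integral_mono_of_nonneg
        (ae_of_all _ fun ω => mul_nonneg (hU01 ω).1 (hV01 ω).1) (integrable_const 1)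
        (ae_of_all _ fun ω => mul_le_one₀ (hU01 ω).2 (hV01 ω).1 (hV01 ω).2)
    _ = 1 := by simp
  have : 0 ≤ μ[U] * μ[V] :=
    mul_nonneg (integral_nonneg fun ω => (hU01 ω).1) (integral_nonneg fun ω => (hV01 ω).1)
  linarith

lemma variance_sum_le_card_dependent [IsProbabilityMeasure μ] {ι : Type*} {s : Finset ι}
    {W : ι → Ω → ℝ} (R : ι → ι → Prop) [DecidableRel R] (hW : ∀ i, Measurable (W i))
    (hW01 : ∀ i ω, W i ω ∈ Set.Icc 0 1)
    (hindep : ∀ i ∈ s, ∀ j ∈ s, ¬R i j → IndepFun (W i) (W j) μ) :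
    Var[∑ i ∈ s, W i; μ] ≤ ∑ i ∈ s, (#{j ∈ s | R i j} : ℝ) := by
  have hL2 : ∀ i, MemLp (W i) 2 μ := fun i =>
    memLp_of_bounded (ae_of_all _ (hW01 i)) (hW i).aestronglyMeasurable 2
  rw [variance_sum' fun i _ => hL2 i]
  refine sum_le_sum fun i hi => ?_
  rw [← sum_filter_add_sum_filter_not s (R i), sum_eq_zero (s := {j ∈ s | ¬R i j})
    fun j hj => ?_, add_zero]
  · calc ∑ j ∈ s with R i j, cov[W i, W j; μ] ≤ ∑ j ∈ s with R i j, (1 : ℝ) :=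
          sum_le_sum fun j _ => covariance_le_one_of_mem_Icc (hW i) (hW j) (hW01 i) (hW01 j)
      _ = #{j ∈ s | R i j} := by simp
  · obtain ⟨hj, hR⟩ := mem_filter.1 hj
    exact (hindep i hi j hj hR).covariance_eq_zero (hL2 i) (hL2 j)

lemma tendsto_measure_abs_sub_integral_ge [IsFiniteMeasure μ] {W : ℕ → Ω → ℝ} {a : ℕ → ℝ}
    (hW : ∀ n, MemLp (W n) 2 μ) (ha : ∀ᶠ n in atTop, 0 < a n)
    (hvar : Tendsto (fun n => Var[W n; μ] / a n ^ 2) atTop (𝓝 0)) {ε : ℝ} (hε : 0 < ε) :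
    Tendsto (fun n => μ {ω | ε * a n ≤ |W n ω - μ[W n]|}) atTop (𝓝 0) := by
  have hbound : Tendsto (fun n => ENNReal.ofReal (Var[W n; μ] / a n ^ 2 / ε ^ 2)) atTop (𝓝 0) := by
    simpa using ENNReal.tendsto_ofReal (hvar.div_const (ε ^ 2))
  refine tendsto_of_tendsto_of_tendsto_of_le_of_le' tendsto_const_nhds hbound
    (Eventually.of_forall fun _ => zero_le) ?_
  filter_upwards [ha] with n hn
  calc μ {ω | ε * a n ≤ |W n ω - μ[W n]|} ≤ ENNReal.ofReal (Var[W n; μ] / (ε * a n) ^ 2) :=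
        meas_ge_le_variance_div_sq (hW n) (by positivity)
    _ = ENNReal.ofReal (Var[W n; μ] / a n ^ 2 / ε ^ 2) := by rw [mul_pow, div_div, mul_comm]

end Dependence

section PairCount

variable {Ω : Type*} {mΩ : MeasurableSpace Ω} {μ : Measure Ω} [IsProbabilityMeasure μ]

variable {β : Type*}

noncomputable def pairIndicator (Z : ℕ → Ω → β) (S : Set (β × β)) (p : ℕ × ℕ) : Ω → ℝ :=
  fun ω => S.indicator 1 (Z p.1 ω, Z p.2 ω)

noncomputable def pairCount (Z : ℕ → Ω → β) (S : Set (β × β)) (n : ℕ) : Ω → ℝ :=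
  ∑ p ∈ (range n).offDiag, pairIndicator Z S p

variable {Z : ℕ → Ω → β} {S : Set (β × β)}

lemma pairIndicator_mem_Icc (p : ℕ × ℕ) (ω : Ω) : pairIndicator Z S p ω ∈ Set.Icc 0 1 :=
  ⟨Set.indicator_nonneg (fun _ _ => zero_le_one) _,
    Set.indicator_le_self' (fun _ _ => zero_le_one) _⟩

variable [MeasurableSpace β]

lemma measurable_pairIndicator (hZ : ∀ i, Measurable (Z i)) (hS : MeasurableSet S) (p : ℕ × ℕ) :
    Measurable (pairIndicator Z S p) :=
  (measurable_one.indicator hS).comp ((hZ p.1).prodMk (hZ p.2))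

lemma memLp_pairCount (hZ : ∀ i, Measurable (Z i)) (hS : MeasurableSet S) (n : ℕ) :
    MemLp (pairCount Z S n) 2 μ :=
  memLp_finsetSum' _ fun p _ => memLp_of_bounded (ae_of_all _ (pairIndicator_mem_Icc p))
    (measurable_pairIndicator hZ hS p).aestronglyMeasurable 2

lemma integral_pairCount (hZ : ∀ i, Measurable (Z i)) (hS : MeasurableSet S) (n : ℕ) :
    μ[pairCount Z S n] = ∑ p ∈ (range n).offDiag, μ.real {ω | (Z p.1 ω, Z p.2 ω) ∈ S} := by
  have hint : ∀ p, Integrable (pairIndicator Z S p) μ :=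
    fun p => (integrable_const 1).indicator hS |>.comp_measurable ((hZ p.1).prodMk (hZ p.2))
  simp only [pairCount, Finset.sum_apply]
  rw [integral_finsetSum _ fun p _ => hint p]
  refine sum_congr rfl fun p _ => ?_
  exact integral_indicator_one ((hZ p.1).prodMk (hZ p.2) hS)

lemma variance_pairCount_le (hZ : ∀ i, Measurable (Z i)) (hindep : iIndepFun Z μ)
    (hS : MeasurableSet S) (n : ℕ) :
    Var[pairCount Z S n; μ] ≤ 4 * n ^ 3 := by
  classical
  have hindep_pairs : ∀ p q : ℕ × ℕ, ¬(p.1 = q.1 ∨ p.1 = q.2 ∨ p.2 = q.1 ∨ p.2 = q.2) →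
      IndepFun (pairIndicator Z S p) (pairIndicator Z S q) μ := by
    intro p q hpq
    simp only [not_or] at hpq
    obtain ⟨h11, h12, h21, h22⟩ := hpq
    exact (hindep.indepFun_prodMk_prodMk hZ p.1 p.2 q.1 q.2 h11 h12 h21 h22).comp
      (measurable_one.indicator hS) (measurable_one.indicator hS)
  have hcard : #(range n).offDiag ≤ n * n := by
    rw [offDiag_card, card_range]; exact Nat.sub_le _ _
  calc Var[pairCount Z S n; μ]
      ≤ ∑ p ∈ (range n).offDiag,
          (#{q ∈ (range n).offDiag | p.1 = q.1 ∨ p.1 = q.2 ∨ p.2 = q.1 ∨ p.2 = q.2} : ℝ) :=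
        variance_sum_le_card_dependent _ (measurable_pairIndicator hZ hS) pairIndicator_mem_Icc
          fun p _ q _ => hindep_pairs p q
    _ ≤ ∑ _p ∈ (range n).offDiag, (4 * n : ℝ) := sum_le_sum fun p _ => by
        exact_mod_cast card_range n ▸ card_filter_offDiag_meets_le (range n) p
    _ ≤ 4 * n ^ 3 := by
        rw [sum_const, nsmul_eq_mul]
        have : (#(range n).offDiag : ℝ) ≤ n * n := by exact_mod_cast hcard
        nlinarith

lemma tendsto_variance_pairCount_div_sq (hZ : ∀ i, Measurable (Z i)) (hindep : iIndepFun Z μ)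
    (hS : MeasurableSet S) :
    Tendsto (fun n : ℕ => Var[pairCount Z S n; μ] / (n * (n - 1)) ^ 2) atTop (𝓝 0) := by
  refine squeeze_zero'
    (Eventually.of_forall fun n => div_nonneg (variance_nonneg _ _) (sq_nonneg _)) ?_
    (tendsto_const_div_atTop_nhds_zero_nat 16)
  filter_upwards [eventually_ge_atTop 2] with n hn
  replace hn : (2 : ℝ) ≤ n := by exact_mod_cast hn
  have hpos : (0 : ℝ) < (n * (n - 1)) ^ 2 := pow_pos (by nlinarith) 2
  calc Var[pairCount Z S n; μ] / (n * (n - 1)) ^ 2 ≤ 4 * n ^ 3 / ((n : ℝ) * (n - 1)) ^ 2 := by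
        gcongr; exact variance_pairCount_le hZ hindep hS n
    _ ≤ 16 / (n : ℝ) := by
        rw [div_le_div_iff₀ hpos (by positivity)]
        nlinarith [mul_nonneg (mul_nonneg (sq_nonneg (n : ℝ)) (sub_nonneg.2 hn))
          (by linarith : (0 : ℝ) ≤ 3 * n - 2)]

end PairCount

def concordantSet : Set ((ℝ × ℝ) × (ℝ × ℝ)) := {q | q.1.1 < q.2.1 ∧ q.1.2 ≤ q.2.2}

lemma measurableSet_concordantSet : MeasurableSet concordantSet :=
  (measurableSet_lt (measurable_fst.comp measurable_fst) (measurable_fst.comp measurable_snd)).inter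
    (measurableSet_le (measurable_snd.comp measurable_fst) (measurable_snd.comp measurable_snd))

section Kendall

variable {Ω : Type*} {mΩ : MeasurableSpace Ω} {μ : Measure Ω} [IsProbabilityMeasure μ]
  {X Y : ℕ → Ω → ℝ}

lemma sum_rank_concordant_eq_pairCount {n : ℕ} {ω : Ω} (π : Equiv.Perm (Fin n))
    (hπ : StrictMono fun k : Fin n => X (π k : ℕ) ω) :
    (∑ i : Fin n, ∑ j : Fin n,
        if j < i ∧ Y (π j : ℕ) ω ≤ Y (π i : ℕ) ω then (1 : ℝ) else 0)
      = pairCount (fun i ω => (X i ω, Y i ω)) concordantSet n ω := by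
  rw [sum_ite_lt_perm_eq_sum_offDiag (X · ω) (Y · ω) π hπ, pairCount, Finset.sum_apply]
  simp [pairIndicator, Set.indicator_apply, concordantSet]

lemma integral_pairCount_concordantSet (hXY : ∀ i, Measurable fun ω => (X i ω, Y i ω))
    (hindep : iIndepFun (fun i ω => (X i ω, Y i ω)) μ)
    (hatoms : ∀ i, NullSingletonClass (μ.map (X i))) (n : ℕ) :
    μ[pairCount (fun i ω => (X i ω, Y i ω)) concordantSet n]
      = ∑ i ∈ range n, ∑ j ∈ range n,
          if j ≠ i then μ.real {ω | X j ω ≤ X i ω ∧ Y j ω ≤ Y i ω} else 0 := by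
  have hX : ∀ i, Measurable (X i) := fun i => measurable_fst.comp (hXY i)
  have hties : ∀ a b, a ≠ b →
      μ.real {ω | X a ω < X b ω ∧ Y a ω ≤ Y b ω} = μ.real {ω | X a ω ≤ X b ω ∧ Y a ω ≤ Y b ω} := by
    intro a b hab
    have hnull := ((hindep.indepFun hab).comp measurable_fst measurable_fst).measure_eq_eq_zero
      (hX a) (hX b)
    refine measureReal_congr ((measure_eq_zero_iff_ae_notMem.1 hnull).mono fun ω hω => ?_)
    exact propext (and_congr_left' (lt_iff_le_and_ne.trans (and_iff_left hω)))
  rw [integral_pairCount hXY measurableSet_concordantSet, sum_comm,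
    ← sum_offDiag_eq_sum_sum fun a _ => if_neg (not_not.2 rfl)]
  refine sum_congr rfl fun p hp => ?_
  rw [if_pos (mem_offDiag.1 hp).2.2, ← hties _ _ (mem_offDiag.1 hp).2.2]
  rfl

lemma le_abs_sub_of_lt_abs_kendall_sub {t m τ d ε : ℝ} (hd : 0 < d)
    (hm : |4 * m / d - 1 - τ| < ε / 2) (ht : ε < |4 * t / d - 1 - τ|) :
    ε / 8 * d ≤ |t - m| := by
  have hsplit : 4 * t / d - 1 - τ = 4 * (t - m) / d + (4 * m / d - 1 - τ) := by ring
  have hdev : |4 * (t - m) / d| = 4 * |t - m| / d := by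
    rw [abs_div, abs_mul, abs_of_pos hd, abs_of_pos four_pos]
  have : ε / 2 < 4 * |t - m| / d := by
    linarith [hsplit ▸ abs_add_le (4 * (t - m) / d) (4 * m / d - 1 - τ)]
  rw [lt_div_iff₀ hd] at this
  linarith

end Kendall

end ProbabilityTheory

theorem rank_kendall_tendsto_in_probability_general
    {Ω : Type*} [MeasureSpace Ω] [IsProbabilityMeasure (ℙ : Measure Ω)]
    (X Y : ℕ → Ω → ℝ)
    (hXY : ∀ i, Measurable fun ω => (X i ω, Y i ω))
    (hindep : iIndepFun (fun i ω => (X i ω, Y i ω)) ℙ)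
    (f : ℕ → ℝ × ℝ → ℝ)
    (hlaw : ∀ i, Measure.map (fun ω => (X i ω, Y i ω)) ℙ
        = (volume : Measure (ℝ × ℝ)).withDensity fun p => ENNReal.ofReal (f i p))
    (σ : (n : ℕ) → Ω → Equiv.Perm (Fin n))
    (hσ : ∀ n : ℕ, ∀ᵐ ω ∂ℙ, StrictMono fun j : Fin n => X (σ n ω j : ℕ) ω)
    (τ : ℝ)
    (hτ : Tendsto (fun n : ℕ =>
        4 * (∑ i ∈ Finset.range n, ∑ j ∈ Finset.range n,
            if j ≠ i then (ℙ {ω | X j ω ≤ X i ω ∧ Y j ω ≤ Y i ω}).toReal else 0)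
          / (n * (n - 1)) - 1)
      atTop (nhds τ)) :
    ∀ ε > (0 : ℝ),
      Tendsto (fun n : ℕ =>
          ℙ {ω | ε < |4 * (∑ i : Fin n, ∑ j : Fin n,
              if j < i ∧ Y (σ n ω j : ℕ) ω ≤ Y (σ n ω i : ℕ) ω then (1 : ℝ) else 0)
            / (n * (n - 1)) - 1 - τ|})
        atTop (nhds 0) := by
  intro ε hε
  set T := pairCount (fun i ω => (X i ω, Y i ω)) concordantSet
  have hatoms : ∀ i, NullSingletonClass ((ℙ : Measure Ω).map (X i)) := fun i =>
    nullSingletonClass_map_of_map_prodMk_absolutelyContinuous (hXY i)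
      (by rw [hlaw i, ← Measure.volume_eq_prod]; exact withDensity_absolutelyContinuous _ _)
  have hmean : Tendsto (fun n : ℕ => 4 * (∫ ω, T n ω) / (n * (n - 1)) - 1) atTop (𝓝 τ) := by
    simpa only [T, integral_pairCount_concordantSet hXY hindep hatoms, measureReal_def] using hτ
  have hpos : ∀ᶠ n : ℕ in atTop, (0 : ℝ) < n * (n - 1) :=
    eventually_ge_atTop 2 |>.mono fun n hn => by
      have : (2 : ℝ) ≤ n := by exact_mod_cast hn
      nlinarith
  have hdev := tendsto_measure_abs_sub_integral_ge
    (memLp_pairCount hXY measurableSet_concordantSet) hpos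
    (tendsto_variance_pairCount_div_sq hXY hindep measurableSet_concordantSet)
    (by positivity : 0 < ε / 8)
  refine tendsto_of_tendsto_of_tendsto_of_le_of_le' tendsto_const_nhds hdev
    (Eventually.of_forall fun _ => zero_le) ?_
  filter_upwards [Metric.tendsto_nhds.1 hmean (ε / 2) (by positivity), hpos] with n hmean_n hn
  refine measure_mono_ae ?_
  filter_upwards [hσ n] with ω hsorted hω
  change ε < |4 * _ / _ - 1 - τ| at hω
  rw [sum_rank_concordant_eq_pairCount _ hsorted] at hω
  exact le_abs_sub_of_lt_abs_kendall_sub hn hmean_n hω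

/-- For a sequence of independent random vectors `(X_i, Y_i)`, `i ≥ 1`, with
absolutely continuous bivariate distributions (given by densities `f i`), if the theoretical
Kendall correlation coefficients `τ_n = 4 ∑_{i≠j} P(X_j ≤ X_i, Y_j ≤ Y_i)/(n(n-1)) - 1`
converge to `τ`, then the rank Kendall correlation coefficient
`τ̃_n = 4 ∑_{j<i} I(Y_{j,n} ≤ Y_{i,n}) / (n(n-1)) - 1` (built from the concomitants of the
order statistics of the first `n` observations of the `X`-sample, encoded by a.s. sorting
permutations `σ n ω`) converges in probability to `τ`:
for every `ε > 0`, `P(|τ̃_n − τ| > ε) → 0` as `n → ∞`. -/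
theorem rank_kendall_tendsto_in_probability
    {Ω : Type*} [MeasureSpace Ω] [IsProbabilityMeasure (ℙ : Measure Ω)]
    (X Y : ℕ → Ω → ℝ)
    (hXY : ∀ i, Measurable fun ω => (X i ω, Y i ω))
    (hindep : iIndepFun (fun i ω => (X i ω, Y i ω)) ℙ)
    (f : ℕ → ℝ × ℝ → ℝ)
    (hf_meas : ∀ i, Measurable (f i))
    (hf_nonneg : ∀ i p, 0 ≤ f i p)
    (hlaw : ∀ i, Measure.map (fun ω => (X i ω, Y i ω)) ℙ
        = (volume : Measure (ℝ × ℝ)).withDensity fun p => ENNReal.ofReal (f i p))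
    (σ : (n : ℕ) → Ω → Equiv.Perm (Fin n))
    (hσ : ∀ n : ℕ, ∀ᵐ ω ∂ℙ, StrictMono fun j : Fin n => X (σ n ω j : ℕ) ω)
    (τ : ℝ)
    (hτ : Tendsto (fun n : ℕ =>
        4 * (∑ i ∈ Finset.range n, ∑ j ∈ Finset.range n,
            if j ≠ i then (ℙ {ω | X j ω ≤ X i ω ∧ Y j ω ≤ Y i ω}).toReal else 0)
          / (n * (n - 1)) - 1)
      atTop (nhds τ)) :
    ∀ ε > (0 : ℝ),
      Tendsto (fun n : ℕ =>
          ℙ {ω | ε < |4 * (∑ i : Fin n, ∑ j : Fin n,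
              if j < i ∧ Y (σ n ω j : ℕ) ω ≤ Y (σ n ω i : ℕ) ω then (1 : ℝ) else 0)
            / (n * (n - 1)) - 1 - τ|})
        atTop (nhds 0) :=
  rank_kendall_tendsto_in_probability_general X Y hXY hindep f hlaw σ hσ τ hτ
end

section
/- Let (X_1,Y_1),...,(X_n,Y_n) be independent random vectors with absolutely continuous bivariate distribution functions, and let τ̃_n be the rank Kendall correlation coefficient. Then Var(τ̃_n) ≤ 16 (n(n-1)/2 + n(n-1)(n-2)) / (n-1)^4; consequently Var(τ̃_n) → 0 as n → ∞. -/
/-!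
Sorting by the `X`-sample is only a relabelling: on the event where the sort is strict, the
concomitant count in `τ̃_n` equals `S = ∑_{a ≠ b} 1{X_a < X_b, Y_a ≤ Y_b}`, so
`τ̃_n = 4 S / (n (n - 1)) - 1` almost surely. The variance of `S` is the sum of the covariances of
its `n (n - 1)` indicators. Two of them are independent unless their index pairs share an index,
and every covariance is at most `1/4`, since each indicator has variance at most `1/4`
(Popoviciu). As an index pair shares an index with at most `4 n` others, `Var S ≤ n² (n - 1)`
and hence `Var τ̃_n ≤ 16 / (n - 1)`.
-/

open MeasureTheory ProbabilityTheory Filter Finset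

section
variable {Ω ι : Type*} {mΩ : MeasurableSpace Ω} {μ : Measure Ω} [IsFiniteMeasure μ]

lemma two_mul_covariance_le_variance_add_variance {X Y : Ω → ℝ} (hX : MemLp X 2 μ)
    (hY : MemLp Y 2 μ) : 2 * cov[X, Y; μ] ≤ Var[X; μ] + Var[Y; μ] := by
  have h := variance_nonneg (fun ω => X ω - Y ω) μ
  rw [variance_fun_sub hX hY] at h
  linarith

lemma variance_sum_le_of_indepFun {s : Finset ι} {Z : ι → Ω → ℝ} (R : ι → ι → Prop)
    [DecidableRel R] {v : ℝ} (hZ : ∀ i ∈ s, MemLp (Z i) 2 μ) (hv : ∀ i ∈ s, Var[Z i; μ] ≤ v)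
    (hindep : ∀ i ∈ s, ∀ j ∈ s, ¬ R i j → Z i ⟂ᵢ[μ] Z j) :
    Var[∑ i ∈ s, Z i; μ] ≤ v * ∑ i ∈ s, #{j ∈ s | R i j} := by
  rw [variance_sum' hZ, Nat.cast_sum, mul_sum]
  refine sum_le_sum fun i hi => ?_
  rw [← sum_boole, mul_sum]
  refine sum_le_sum fun j hj => ?_
  by_cases hij : R i j
  · have := two_mul_covariance_le_variance_add_variance (hZ i hi) (hZ j hj)
    simp only [hij, if_true, mul_one]
    linarith [hv i hi, hv j hj]
  · simp only [hij, if_false, mul_zero]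
    exact ((hindep i hi j hj hij).covariance_eq_zero (hZ i hi) (hZ j hj)).le
end

noncomputable def concordance (p q : ℝ × ℝ) : ℝ := if p.1 < q.1 ∧ p.2 ≤ q.2 then 1 else 0

lemma concordance_self (p : ℝ × ℝ) : concordance p p = 0 := by simp [concordance]

lemma concordance_mem_Icc (p q : ℝ × ℝ) : concordance p q ∈ Set.Icc 0 1 := by
  unfold concordance; split_ifs <;> simp

lemma measurable_concordance : Measurable fun pq : (ℝ × ℝ) × (ℝ × ℝ) => concordance pq.1 pq.2 :=
  Measurable.ite ((measurableSet_lt measurable_fst.fst measurable_snd.fst).inter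
    (measurableSet_le measurable_fst.snd measurable_snd.snd)) measurable_const measurable_const

lemma card_filter_shareIndex_le {ι : Type*} [Fintype ι] [DecidableEq ι] (p : ι × ι) :
    #{q : ι × ι | p.1 = q.1 ∨ p.1 = q.2 ∨ p.2 = q.1 ∨ p.2 = q.2} ≤ 4 * Fintype.card ι := by
  have hfst (a : ι) : #{q : ι × ι | a = q.1} = Fintype.card ι := by
    rw [show ({q : ι × ι | a = q.1} : Finset _) = {a} ×ˢ univ by ext ⟨x, y⟩; simp [eq_comm]]
    simp
  have hsnd (a : ι) : #{q : ι × ι | a = q.2} = Fintype.card ι := by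
    rw [show ({q : ι × ι | a = q.2} : Finset _) = univ ×ˢ {a} by ext ⟨x, y⟩; simp [eq_comm]]
    simp
  simp only [filter_or]
  grw [card_union_le, card_union_le, card_union_le, hfst, hsnd, hfst, hsnd]
  omega

section
variable {Ω ι : Type*} {mΩ : MeasurableSpace Ω} {μ : Measure Ω} [IsProbabilityMeasure μ]
  [Fintype ι] [DecidableEq ι] {Z : ι → Ω → ℝ × ℝ}

lemma variance_sum_concordance_le (hZ : ∀ i, Measurable (Z i)) (hindep : iIndepFun Z μ) :
    Var[∑ p ∈ (univ : Finset ι).offDiag, fun ω => concordance (Z p.1 ω) (Z p.2 ω); μ]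
      ≤ (Fintype.card ι : ℝ) ^ 2 * (Fintype.card ι - 1) := by
  have hmeas (p : ι × ι) : Measurable fun ω => concordance (Z p.1 ω) (Z p.2 ω) :=
    measurable_concordance.comp ((hZ p.1).prodMk (hZ p.2))
  have hIcc (p : ι × ι) : ∀ᵐ ω ∂μ, concordance (Z p.1 ω) (Z p.2 ω) ∈ Set.Icc 0 1 :=
    ae_of_all _ fun ω => concordance_mem_Icc _ _
  calc _ ≤ (1 / 4 : ℝ) * ((∑ p ∈ univ.offDiag, #{q ∈ (univ : Finset ι).offDiag |
          p.1 = q.1 ∨ p.1 = q.2 ∨ p.2 = q.1 ∨ p.2 = q.2} : ℕ) : ℝ) := by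
        refine variance_sum_le_of_indepFun
          (fun p q : ι × ι => p.1 = q.1 ∨ p.1 = q.2 ∨ p.2 = q.1 ∨ p.2 = q.2)
          (fun p _ => memLp_of_bounded (hIcc p) (hmeas p).aestronglyMeasurable 2)
          (fun p _ => (variance_le_sq_of_bounded (hIcc p) (hmeas p).aemeasurable).trans_eq
            (by norm_num))
          fun p _ q _ hpq => ?_
        push Not at hpq
        exact (hindep.indepFun_prodMk_prodMk hZ p.1 p.2 q.1 q.2 hpq.1 hpq.2.1 hpq.2.2.1
          hpq.2.2.2).comp measurable_concordance measurable_concordance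
    _ ≤ (1 / 4 : ℝ) * ((∑ _p ∈ (univ : Finset ι).offDiag, 4 * Fintype.card ι : ℕ) : ℝ) := by
        gcongr with p
        exact (card_le_card (filter_subset_filter _ (subset_univ _))).trans
          (card_filter_shareIndex_le p)
    _ = _ := by
        rw [sum_const, offDiag_card, card_univ, smul_eq_mul]
        push_cast [Nat.le_mul_self]
        ring
end

lemma sum_sorted_concordance_eq {n : ℕ} (z : Fin n → ℝ × ℝ) (σ : Equiv.Perm (Fin n))
    (hσ : StrictMono fun j => (z (σ j)).1) :
    (∑ i, ∑ j, if j < i ∧ (z (σ j)).2 ≤ (z (σ i)).2 then (1 : ℝ) else 0)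
      = ∑ p ∈ univ.offDiag, concordance (z p.1) (z p.2) := by
  calc (∑ i, ∑ j, if j < i ∧ (z (σ j)).2 ≤ (z (σ i)).2 then (1 : ℝ) else 0)
      = ∑ i, ∑ j, concordance (z (σ j)) (z (σ i)) := by simp only [concordance, hσ.lt_iff_lt]
    _ = ∑ a, ∑ b, concordance (z b) (z a) := by
        rw [← Equiv.sum_comp σ fun a => ∑ b, concordance (z b) (z a)]
        exact sum_congr rfl fun i _ => Equiv.sum_comp σ fun b => concordance (z b) (z (σ i))
    _ = ∑ p : Fin n × Fin n, concordance (z p.1) (z p.2) := by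
        rw [sum_comm, Fintype.sum_prod_type]
    _ = ∑ p ∈ univ.offDiag, concordance (z p.1) (z p.2) := by
        refine (sum_subset (subset_univ _) fun p _ hp => ?_).symm
        rw [mem_offDiag, not_and, not_and, not_not] at hp
        rw [hp (mem_univ _) (mem_univ _), concordance_self]

lemma variance_rankKendall_le {Ω : Type*} {mΩ : MeasurableSpace Ω} {μ : Measure Ω}
    [IsProbabilityMeasure μ] (X Y : ℕ → Ω → ℝ)
    (hXY : ∀ i, Measurable fun ω => (X i ω, Y i ω))
    (hindep : iIndepFun (fun i ω => (X i ω, Y i ω)) μ)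
    {n : ℕ} (hn : 2 ≤ n) (σ : Ω → Equiv.Perm (Fin n))
    (hσ : ∀ᵐ ω ∂μ, StrictMono fun j : Fin n => X (σ ω j : ℕ) ω) (τ : Ω → ℝ)
    (hτ : ∀ ω, τ ω = 4 * (∑ i : Fin n, ∑ j : Fin n,
      if j < i ∧ Y (σ ω j : ℕ) ω ≤ Y (σ ω i : ℕ) ω then (1 : ℝ) else 0) / (n * (n - 1)) - 1) :
    Var[τ; μ] ≤ 16 / ((n : ℝ) - 1) := by
  set S := ∑ p ∈ (univ : Finset (Fin n)).offDiag,
    fun ω => concordance (X p.1 ω, Y p.1 ω) (X p.2 ω, Y p.2 ω)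
  have hS : AEStronglyMeasurable S μ := (Finset.aemeasurable_sum _ fun p _ =>
    (measurable_concordance.comp ((hXY p.1).prodMk (hXY p.2))).aemeasurable).aestronglyMeasurable
  have hτS : τ =ᵐ[μ] fun ω => 4 / (n * (n - 1)) * S ω - 1 := by
    filter_upwards [hσ] with ω hω
    rw [hτ, sum_sorted_concordance_eq (fun k : Fin n => (X k ω, Y k ω)) _ hω]
    simp only [S, Finset.sum_apply]
    ring
  have hVarS : Var[S; μ] ≤ (n : ℝ) ^ 2 * (n - 1) := by
    simpa using variance_sum_concordance_le (Z := fun (k : Fin n) ω => (X k ω, Y k ω))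
      (fun k => hXY k) (hindep.precomp Fin.val_injective)
  have hn1 : (0 : ℝ) < n - 1 := by
    have : (2 : ℝ) ≤ n := by exact_mod_cast hn
    linarith
  rw [variance_congr hτS, variance_sub_const (hS.const_mul _), variance_const_mul]
  calc _ ≤ (4 / (n * (n - 1) : ℝ)) ^ 2 * ((n : ℝ) ^ 2 * (n - 1)) := by gcongr
    _ = 16 / ((n : ℝ) - 1) := by field_simp; ring

theorem variance_rank_kendall_bound_general
    {Ω : Type*} [MeasureSpace Ω] [IsProbabilityMeasure (ℙ : Measure Ω)]
    (X Y : ℕ → Ω → ℝ)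
    (hXY : ∀ i, Measurable fun ω => (X i ω, Y i ω))
    (hindep : iIndepFun (fun i ω => (X i ω, Y i ω)) ℙ)
    (σ : (n : ℕ) → Ω → Equiv.Perm (Fin n))
    (hσ : ∀ n : ℕ, ∀ᵐ ω ∂ℙ, StrictMono fun j : Fin n => X (σ n ω j : ℕ) ω)
    (τRank : (n : ℕ) → Ω → ℝ)
    (hτRank : ∀ (n : ℕ) (ω : Ω), τRank n ω =
        4 * (∑ i : Fin n, ∑ j : Fin n,
            if j < i ∧ Y (σ n ω j : ℕ) ω ≤ Y (σ n ω i : ℕ) ω then (1 : ℝ) else 0)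
          / (n * (n - 1)) - 1) :
    (∀ n : ℕ, 2 ≤ n →
      variance (τRank n) ℙ
        ≤ 16 * ((n : ℝ) * ((n : ℝ) - 1) / 2 + (n : ℝ) * ((n : ℝ) - 1) * ((n : ℝ) - 2))
            / ((n : ℝ) - 1) ^ 4)
    ∧ Tendsto (fun n : ℕ => variance (τRank n) ℙ) atTop (nhds 0) := by
  have hvar (n : ℕ) (hn : 2 ≤ n) : Var[τRank n; ℙ] ≤ 16 / ((n : ℝ) - 1) :=
    variance_rankKendall_le X Y hXY hindep hn (σ n) (hσ n) (τRank n) (hτRank n)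
  refine ⟨fun n hn => (hvar n hn).trans ?_, ?_⟩
  · have hn1 : (1 : ℝ) ≤ n - 1 := by
      have : (2 : ℝ) ≤ n := by exact_mod_cast hn
      linarith
    rw [div_le_div_iff₀ (by linarith) (by positivity)]
    nlinarith [pow_pos (by linarith : (0 : ℝ) < n - 1) 3]
  · exact squeeze_zero' (Eventually.of_forall fun n => variance_nonneg _ _)
      (eventually_atTop.2 ⟨2, hvar⟩) (tendsto_const_nhds.div_atTop
        (tendsto_atTop_add_const_right _ (-1) tendsto_natCast_atTop_atTop))

/-- For independent random vectors `(X_1,Y_1), …, (X_n,Y_n)` with absolutely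
continuous bivariate distributions (given by densities `f i`), the rank Kendall correlation
coefficient `τ̃_n = 4 ∑_{j<i} I(Y_{j,n} ≤ Y_{i,n}) / (n(n-1)) - 1` (expressed through the
concomitants of the order statistics of the `X`-sample, encoded by a.s. sorting permutations
`σ n ω`) satisfies `Var(τ̃_n) ≤ 16 (n(n-1)/2 + n(n-1)(n-2)) / (n-1)^4` for every `n ≥ 2`;
consequently `Var(τ̃_n) → 0` as `n → ∞`. -/
theorem variance_rank_kendall_bound
    {Ω : Type*} [MeasureSpace Ω] [IsProbabilityMeasure (ℙ : Measure Ω)]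
    (X Y : ℕ → Ω → ℝ)
    (hXY : ∀ i, Measurable fun ω => (X i ω, Y i ω))
    (hindep : iIndepFun (fun i ω => (X i ω, Y i ω)) ℙ)
    (f : ℕ → ℝ × ℝ → ℝ)
    (hf_meas : ∀ i, Measurable (f i))
    (hf_nonneg : ∀ i p, 0 ≤ f i p)
    (hlaw : ∀ i, Measure.map (fun ω => (X i ω, Y i ω)) ℙ
        = (volume : Measure (ℝ × ℝ)).withDensity fun p => ENNReal.ofReal (f i p))
    (σ : (n : ℕ) → Ω → Equiv.Perm (Fin n))
    (hσ : ∀ n : ℕ, ∀ᵐ ω ∂ℙ, StrictMono fun j : Fin n => X (σ n ω j : ℕ) ω)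
    (τRank : (n : ℕ) → Ω → ℝ)
    (hτRank : ∀ (n : ℕ) (ω : Ω), τRank n ω =
        4 * (∑ i : Fin n, ∑ j : Fin n,
            if j < i ∧ Y (σ n ω j : ℕ) ω ≤ Y (σ n ω i : ℕ) ω then (1 : ℝ) else 0)
          / (n * (n - 1)) - 1) :
    (∀ n : ℕ, 2 ≤ n →
      variance (τRank n) ℙ
        ≤ 16 * ((n : ℝ) * ((n : ℝ) - 1) / 2 + (n : ℝ) * ((n : ℝ) - 1) * ((n : ℝ) - 2))
            / ((n : ℝ) - 1) ^ 4)
    ∧ Tendsto (fun n : ℕ => variance (τRank n) ℙ) atTop (nhds 0) :=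
  variance_rank_kendall_bound_general X Y hXY hindep σ hσ τRank hτRank
end

section
/- Let (X_1,Y_1),...,(X_n,Y_n) be independent random vectors with absolutely continuous bivariate distribution functions, let I_{ji} = I(Y_{j,n} ≤ Y_{i,n}) be concomitant comparison indicators, and let p_{mk} = P(X_k ≤ X_m, Y_k ≤ Y_m). Then E[(Σ_{1≤j<i≤n} I_{ji})²] ≤ (Σ_{k=1}^{n} Σ_{m≠k} p_{mk})² + n(n-1)/2 + n(n-1)(n-2). -/
/-!
After sorting by `X`, the statistic `∑_{j<i} I_{ji}` counts the pairs `{a, b}` of observations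
that are comparable in the dominance order (`X_a < X_b` and `Y_a ≤ Y_b`, or the reverse), so it is
a sum of `[0, 1]`-valued indicators `C_e` over the edges `e` of the complete graph on the indices.
In the expansion of its square, the terms of two disjoint edges factor by independence, and
`E C_{ab} ≤ p_{ab} + p_{ba}`; each of the `(n choose 2)(2n - 3)` ordered pairs of edges that
meet contributes at most `1`, and `(n choose 2)(2n - 3) = n(n-1)/2 + n(n-1)(n-2)`.
-/

open MeasureTheory ProbabilityTheory Finset

def Dominates {α β : Type*} [Preorder α] [Preorder β] (z z' : α × β) : Prop :=
  z.1 < z'.1 ∧ z.2 ≤ z'.2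

section Dominates

variable {α β : Type*} [Preorder α] [Preorder β]

instance [DecidableLT α] [DecidableLE β] (z z' : α × β) : Decidable (Dominates z z') :=
  inferInstanceAs (Decidable (_ ∧ _))

theorem Dominates.irrefl (z : α × β) : ¬ Dominates z z := fun h => lt_irrefl _ h.1

theorem Dominates.asymm {z z' : α × β} (h : Dominates z z') : ¬ Dominates z' z :=
  fun h' => lt_asymm h.1 h'.1

theorem sum_indicator_concomitant_le_eq_sum_dominates [DecidableLT α] [DecidableLE β]
    {ι : Type*} [Fintype ι] [LinearOrder ι] (x : ι → α) (y : ι → β) (σ : Equiv.Perm ι)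
    (hσ : StrictMono fun j => x (σ j)) :
    ∑ i, ∑ j, (if j < i ∧ y (σ j) ≤ y (σ i) then (1 : ℝ) else 0)
      = ∑ a, ∑ b, if Dominates (x a, y a) (x b, y b) then 1 else 0 := by
  calc ∑ i, ∑ j, (if j < i ∧ y (σ j) ≤ y (σ i) then (1 : ℝ) else 0)
      = ∑ i, ∑ j, if Dominates (x (σ j), y (σ j)) (x (σ i), y (σ i)) then 1 else 0 := by
        simp_rw [Dominates, hσ.lt_iff_lt]
    _ = ∑ i, ∑ a, if Dominates (x a, y a) (x (σ i), y (σ i)) then 1 else 0 :=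
        sum_congr rfl fun i _ => Equiv.sum_comp σ fun a =>
          if Dominates (x a, y a) (x (σ i), y (σ i)) then (1 : ℝ) else 0
    _ = ∑ b, ∑ a, if Dominates (x a, y a) (x b, y b) then 1 else 0 :=
        Equiv.sum_comp σ fun b => ∑ a, if Dominates (x a, y a) (x b, y b) then (1 : ℝ) else 0
    _ = _ := sum_comm

end Dominates

theorem measurableSet_dominates {Ω : Type*} [MeasurableSpace Ω] {f g : Ω → ℝ × ℝ}
    (hf : Measurable f) (hg : Measurable g) : MeasurableSet {ω | Dominates (f ω) (g ω)} :=
  (measurableSet_lt hf.fst hg.fst).inter (measurableSet_le hf.snd hg.snd)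

section FiberSum

variable {α M : Type*} [Fintype α] [DecidableEq α] [AddCommMonoid M]

def fiberSum (h : α → α → M) (e : Sym2 α) : M :=
  ∑ p : α × α with s(p.1, p.2) = e, h p.1 p.2

theorem sum_fiberSum (h : α → α → M) : ∑ e, fiberSum h e = ∑ a, ∑ b, h a b := by
  rw [← Fintype.sum_prod_type']
  exact sum_fiberwise _ _ _

theorem fiberSum_mk_of_ne (h : α → α → M) {a b : α} (hab : a ≠ b) :
    fiberSum h s(a, b) = h a b + h b a := by
  have hfiber : ({p : α × α | s(p.1, p.2) = s(a, b)} : Finset (α × α)) = {(a, b), (b, a)} := by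
    ext ⟨c, d⟩
    simp
  rw [fiberSum, hfiber, sum_pair (by simp [hab])]

theorem fiberSum_mk_self (h : α → α → M) (a : α) : fiberSum h s(a, a) = h a a := by
  have hfiber : ({p : α × α | s(p.1, p.2) = s(a, a)} : Finset (α × α)) = {(a, a)} := by
    ext ⟨c, d⟩
    simp
  rw [fiberSum, hfiber, sum_singleton]

theorem sum_edgeFinset_top_fiberSum (h : α → α → M) (hdiag : ∀ a, h a a = 0) :
    ∑ e ∈ (⊤ : SimpleGraph α).edgeFinset, fiberSum h e = ∑ a, ∑ b, h a b := by
  rw [← sum_fiberSum]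
  refine sum_subset (subset_univ _) fun e _ he => ?_
  induction e using Sym2.ind with
  | h a b =>
    obtain rfl : a = b := by simpa using he
    rw [fiberSum_mk_self, hdiag]

end FiberSum

namespace SimpleGraph

variable {α : Type*} [Fintype α] [DecidableEq α]

theorem card_filter_edgeFinset_top_meets {e : Sym2 α}
    [DecidablePred fun e' : Sym2 α => ∃ v ∈ e, v ∈ e']
    (he : e ∈ (⊤ : SimpleGraph α).edgeFinset) :
    (#{e' ∈ (⊤ : SimpleGraph α).edgeFinset | ∃ v ∈ e, v ∈ e'} : ℝ) = 2 * Fintype.card α - 3 := by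
  obtain ⟨a, b, rfl⟩ : ∃ a b, e = s(a, b) := Sym2.ind (fun a b => ⟨a, b, rfl⟩) e
  have hab : a ≠ b := by simpa using he
  have hunion : {e' ∈ (⊤ : SimpleGraph α).edgeFinset | ∃ v ∈ s(a, b), v ∈ e'} =
      (⊤ : SimpleGraph α).incidenceFinset a ∪ (⊤ : SimpleGraph α).incidenceFinset b := by
    ext e'
    simp [incidenceSet, or_and_right, exists_or, and_or_left]
  have hinter : (⊤ : SimpleGraph α).incidenceFinset a ∩ (⊤ : SimpleGraph α).incidenceFinset b
      = {s(a, b)} := by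
    rw [← coe_inj, coe_inter, coe_incidenceFinset, coe_incidenceFinset,
      incidenceSet_inter_incidenceSet_of_adj _ (by simpa using hab), coe_singleton]
  have hcard : #{e' ∈ (⊤ : SimpleGraph α).edgeFinset | ∃ v ∈ s(a, b), v ∈ e'} + 1
      = 2 * (Fintype.card α - 1) := by
    rw [hunion]
    simpa [hinter, two_mul] using card_union_add_card_inter
      ((⊤ : SimpleGraph α).incidenceFinset a) ((⊤ : SimpleGraph α).incidenceFinset b)
  have hpos : 1 ≤ Fintype.card α := Fintype.card_pos_iff.mpr ⟨a⟩
  have hcard_real := congrArg (Nat.cast (R := ℝ)) hcard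
  push_cast [Nat.cast_sub hpos] at hcard_real
  linarith

end SimpleGraph

theorem integral_sq_sum_le_sq_sum_integral_add_card {Ω ι : Type*} [MeasurableSpace Ω]
    {μ : Measure Ω} [IsProbabilityMeasure μ] (s : Finset ι) (R : ι → ι → Prop) [DecidableRel R]
    (G : ι → Ω → ℝ) (hmeas : ∀ i ∈ s, AEStronglyMeasurable (G i) μ)
    (hnonneg : ∀ i ∈ s, ∀ ω, 0 ≤ G i ω) (hle : ∀ i ∈ s, ∀ ω, G i ω ≤ 1)
    (hindep : ∀ i ∈ s, ∀ j ∈ s, ¬ R i j →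
      ∫ ω, G i ω * G j ω ∂μ = (∫ ω, G i ω ∂μ) * ∫ ω, G j ω ∂μ) :
    ∫ ω, (∑ i ∈ s, G i ω) ^ 2 ∂μ
      ≤ (∑ i ∈ s, ∫ ω, G i ω ∂μ) ^ 2 + ∑ i ∈ s, (#{j ∈ s | R i j} : ℝ) := by
  have hprod_le : ∀ i ∈ s, ∀ j ∈ s, ∀ ω, G i ω * G j ω ≤ 1 := fun i hi j hj ω =>
    mul_le_one₀ (hle i hi ω) (hnonneg j hj ω) (hle j hj ω)
  have hprod_int : ∀ i ∈ s, ∀ j ∈ s, Integrable (fun ω => G i ω * G j ω) μ :=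
    fun i hi j hj => Integrable.of_bound ((hmeas i hi).mul (hmeas j hj)) 1 (ae_of_all _ fun ω => by
      rw [Real.norm_eq_abs, abs_of_nonneg (mul_nonneg (hnonneg i hi ω) (hnonneg j hj ω))]
      exact hprod_le i hi j hj ω)
  have hterm : ∀ i ∈ s, ∀ j ∈ s, ∫ ω, G i ω * G j ω ∂μ
      ≤ (∫ ω, G i ω ∂μ) * (∫ ω, G j ω ∂μ) + if R i j then 1 else 0 := by
    intro i hi j hj
    by_cases hR : R i j
    · have hmean_nonneg : 0 ≤ (∫ ω, G i ω ∂μ) * ∫ ω, G j ω ∂μ :=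
        mul_nonneg (integral_nonneg (hnonneg i hi)) (integral_nonneg (hnonneg j hj))
      have hprod_integral_le : ∫ ω, G i ω * G j ω ∂μ ≤ 1 := by
        simpa using integral_mono (hprod_int i hi j hj) (integrable_const 1) (hprod_le i hi j hj)
      simp only [hR, if_true]
      linarith
    · simp [hR, hindep i hi j hj hR]
  calc ∫ ω, (∑ i ∈ s, G i ω) ^ 2 ∂μ
      = ∑ i ∈ s, ∑ j ∈ s, ∫ ω, G i ω * G j ω ∂μ := by
        simp_rw [sq, sum_mul_sum]
        rw [integral_finsetSum _ fun i hi =>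
          integrable_finsetSum _ fun j hj => hprod_int i hi j hj]
        exact sum_congr rfl fun i hi => integral_finsetSum _ fun j hj => hprod_int i hi j hj
    _ ≤ ∑ i ∈ s, ∑ j ∈ s, ((∫ ω, G i ω ∂μ) * (∫ ω, G j ω ∂μ) + if R i j then 1 else 0) :=
        sum_le_sum fun i hi => sum_le_sum fun j hj => hterm i hi j hj
    _ = (∑ i ∈ s, ∫ ω, G i ω ∂μ) ^ 2 + ∑ i ∈ s, (#{j ∈ s | R i j} : ℝ) := by
        simp_rw [sum_add_distrib, sq, sum_mul_sum, natCast_card_filter]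

section Comparability

variable {Ω ι : Type*} {Z : ι → Ω → ℝ × ℝ}

noncomputable def dominanceIndicator (Z : ι → Ω → ℝ × ℝ) (a b : ι) (ω : Ω) : ℝ :=
  if Dominates (Z a ω) (Z b ω) then 1 else 0

theorem dominanceIndicator_self (a : ι) (ω : Ω) : dominanceIndicator Z a a ω = 0 :=
  if_neg (Dominates.irrefl _)

theorem measurable_dominanceIndicator [MeasurableSpace Ω] (hZ : ∀ i, Measurable (Z i))
    (a b : ι) : Measurable (dominanceIndicator Z a b) :=
  Measurable.ite (measurableSet_dominates (hZ a) (hZ b)) measurable_const measurable_const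

theorem integrable_dominanceIndicator [MeasurableSpace Ω] {μ : Measure Ω} [IsFiniteMeasure μ]
    (hZ : ∀ i, Measurable (Z i)) (a b : ι) : Integrable (dominanceIndicator Z a b) μ :=
  Integrable.of_bound (measurable_dominanceIndicator hZ a b).aestronglyMeasurable 1
    (ae_of_all _ fun ω => by unfold dominanceIndicator; split_ifs <;> norm_num)

variable [DecidableEq ι]

theorem integral_dominanceIndicator_le [MeasurableSpace Ω] {μ : Measure Ω} [IsFiniteMeasure μ]
    (hZ : ∀ i, Measurable (Z i)) (a b : ι) :
    ∫ ω, dominanceIndicator Z a b ω ∂μ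
      ≤ if b ≠ a then (μ {ω | Z a ω ≤ Z b ω}).toReal else 0 := by
  obtain rfl | hab := eq_or_ne a b
  · simp [dominanceIndicator_self]
  have hD : dominanceIndicator Z a b = {ω | Dominates (Z a ω) (Z b ω)}.indicator 1 := by
    ext ω
    simp [dominanceIndicator, Set.indicator_apply]
  rw [if_pos hab.symm, hD, integral_indicator_one (measurableSet_dominates (hZ a) (hZ b))]
  exact measureReal_mono fun ω h => Prod.mk_le_mk.mpr ⟨h.1.le, h.2⟩

variable [Fintype ι]

noncomputable def comparabilityIndicator (Z : ι → Ω → ℝ × ℝ) (e : Sym2 ι) (ω : Ω) : ℝ :=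
  fiberSum (fun a b => dominanceIndicator Z a b ω) e

theorem comparabilityIndicator_mk {a b : ι} (hab : a ≠ b) (ω : Ω) :
    comparabilityIndicator Z s(a, b) ω
      = dominanceIndicator Z a b ω + dominanceIndicator Z b a ω :=
  fiberSum_mk_of_ne _ hab

theorem comparabilityIndicator_nonneg (e : Sym2 ι) (ω : Ω) : 0 ≤ comparabilityIndicator Z e ω :=
  sum_nonneg fun _ _ => ite_nonneg zero_le_one le_rfl

theorem comparabilityIndicator_le_one (e : Sym2 ι) (ω : Ω) :
    comparabilityIndicator Z e ω ≤ 1 := by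
  induction e using Sym2.ind with
  | h a b =>
    obtain rfl | hab := eq_or_ne a b
    · simp [comparabilityIndicator, fiberSum_mk_self, dominanceIndicator_self]
    · rw [comparabilityIndicator_mk hab]
      unfold dominanceIndicator
      split_ifs with h h' <;> first | exact absurd h' h.asymm | norm_num

theorem sum_comparabilityIndicator (ω : Ω) :
    ∑ e ∈ (⊤ : SimpleGraph ι).edgeFinset, comparabilityIndicator Z e ω
      = ∑ a, ∑ b, dominanceIndicator Z a b ω :=
  sum_edgeFinset_top_fiberSum _ fun a => dominanceIndicator_self a ω

variable [MeasurableSpace Ω] {μ : Measure Ω}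

theorem measurable_comparabilityIndicator (hZ : ∀ i, Measurable (Z i)) (e : Sym2 ι) :
    Measurable (comparabilityIndicator Z e) :=
  Finset.measurable_sum _ fun p _ => measurable_dominanceIndicator hZ p.1 p.2

theorem integrable_comparabilityIndicator [IsFiniteMeasure μ] (hZ : ∀ i, Measurable (Z i))
    (e : Sym2 ι) : Integrable (comparabilityIndicator Z e) μ :=
  integrable_finsetSum _ fun p _ => integrable_dominanceIndicator hZ p.1 p.2

theorem integral_comparabilityIndicator_mul_of_not_meets (hZ : ∀ i, Measurable (Z i))
    (hindep : iIndepFun Z μ) {e e' : Sym2 ι} (he : e ∈ (⊤ : SimpleGraph ι).edgeFinset)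
    (he' : e' ∈ (⊤ : SimpleGraph ι).edgeFinset) (hdisj : ¬ ∃ v ∈ e, v ∈ e') :
    ∫ ω, comparabilityIndicator Z e ω * comparabilityIndicator Z e' ω ∂μ
      = (∫ ω, comparabilityIndicator Z e ω ∂μ) * ∫ ω, comparabilityIndicator Z e' ω ∂μ := by
  induction e using Sym2.ind with | h a b => ?_
  induction e' using Sym2.ind with | h c d => ?_
  have hab : a ≠ b := by simpa using he
  have hcd : c ≠ d := by simpa using he'
  simp only [Sym2.mem_iff, not_exists, not_and, not_or] at hdisj
  let g : (ℝ × ℝ) × (ℝ × ℝ) → ℝ := fun p =>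
    (if Dominates p.1 p.2 then 1 else 0) + if Dominates p.2 p.1 then 1 else 0
  have hg : Measurable g :=
    (Measurable.ite (measurableSet_dominates measurable_fst measurable_snd) measurable_const
      measurable_const).add
    (Measurable.ite (measurableSet_dominates measurable_snd measurable_fst) measurable_const
      measurable_const)
  have hC : ∀ {a b : ι}, a ≠ b →
      comparabilityIndicator Z s(a, b) = g ∘ fun ω => (Z a ω, Z b ω) := fun hab =>
    funext fun ω => comparabilityIndicator_mk hab ω
  rw [hC hab, hC hcd]
  have hind := (hindep.indepFun_prodMk_prodMk hZ a b c d (hdisj a (Or.inl rfl)).1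
    (hdisj a (Or.inl rfl)).2 (hdisj b (Or.inr rfl)).1 (hdisj b (Or.inr rfl)).2).comp hg hg
  exact hind.integral_mul_eq_mul_integral
    (hg.comp ((hZ a).prodMk (hZ b))).aestronglyMeasurable
    (hg.comp ((hZ c).prodMk (hZ d))).aestronglyMeasurable

theorem sum_integral_comparabilityIndicator_le [IsFiniteMeasure μ]
    (hZ : ∀ i, Measurable (Z i)) :
    ∑ e ∈ (⊤ : SimpleGraph ι).edgeFinset, ∫ ω, comparabilityIndicator Z e ω ∂μ
      ≤ ∑ a, ∑ b, if b ≠ a then (μ {ω | Z a ω ≤ Z b ω}).toReal else 0 :=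
  calc ∑ e ∈ (⊤ : SimpleGraph ι).edgeFinset, ∫ ω, comparabilityIndicator Z e ω ∂μ
      = ∫ ω, ∑ a, ∑ b, dominanceIndicator Z a b ω ∂μ := by
        simp_rw [← sum_comparabilityIndicator]
        exact (integral_finsetSum _ fun e _ => integrable_comparabilityIndicator hZ e).symm
    _ = ∑ a, ∑ b, ∫ ω, dominanceIndicator Z a b ω ∂μ := by
        rw [integral_finsetSum _ fun a _ =>
          integrable_finsetSum _ fun b _ => integrable_dominanceIndicator hZ a b]
        exact sum_congr rfl fun a _ =>
          integral_finsetSum _ fun b _ => integrable_dominanceIndicator hZ a b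
    _ ≤ _ := sum_le_sum fun a _ => sum_le_sum fun b _ => integral_dominanceIndicator_le hZ a b

end Comparability

theorem second_moment_concomitant_indicator_sum_bound_general
    {Ω : Type*} [MeasureSpace Ω] [IsProbabilityMeasure (ℙ : Measure Ω)]
    (n : ℕ)
    (X Y : Fin n → Ω → ℝ)
    (hXY : ∀ i, Measurable fun ω => (X i ω, Y i ω))
    (hindep : iIndepFun (fun i ω => (X i ω, Y i ω)) ℙ)
    (σ : Ω → Equiv.Perm (Fin n))
    (hσ : ∀ᵐ ω ∂ℙ, StrictMono fun j : Fin n => X (σ ω j) ω) :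
    ∫ ω, (∑ i : Fin n, ∑ j : Fin n,
        if j < i ∧ Y (σ ω j) ω ≤ Y (σ ω i) ω then (1 : ℝ) else 0) ^ 2 ∂ℙ
      ≤ (∑ k : Fin n, ∑ m : Fin n,
          if m ≠ k then (ℙ {ω | X k ω ≤ X m ω ∧ Y k ω ≤ Y m ω}).toReal else 0) ^ 2
        + (n : ℝ) * ((n : ℝ) - 1) / 2 + (n : ℝ) * ((n : ℝ) - 1) * ((n : ℝ) - 2) := by
  let Z : Fin n → Ω → ℝ × ℝ := fun i ω => (X i ω, Y i ω)
  let E := (⊤ : SimpleGraph (Fin n)).edgeFinset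
  have hS : ∀ᵐ ω ∂ℙ, (∑ i : Fin n, ∑ j : Fin n,
      if j < i ∧ Y (σ ω j) ω ≤ Y (σ ω i) ω then (1 : ℝ) else 0) ^ 2
        = (∑ e ∈ E, comparabilityIndicator Z e ω) ^ 2 := by
    filter_upwards [hσ] with ω hω
    rw [sum_indicator_concomitant_le_eq_sum_dominates (X · ω) (Y · ω) (σ ω) hω,
      sum_comparabilityIndicator]
    rfl
  rw [integral_congr_ae hS]
  calc _ ≤ (∑ e ∈ E, ∫ ω, comparabilityIndicator Z e ω) ^ 2
          + ∑ e ∈ E, (#{e' ∈ E | ∃ v ∈ e, v ∈ e'} : ℝ) :=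
        integral_sq_sum_le_sq_sum_integral_add_card E _ _
          (fun e _ => (measurable_comparabilityIndicator hXY e).aestronglyMeasurable)
          (fun e _ => comparabilityIndicator_nonneg e) (fun e _ => comparabilityIndicator_le_one e)
          fun e he e' he' => integral_comparabilityIndicator_mul_of_not_meets hXY hindep he he'
    _ ≤ (∑ k : Fin n, ∑ m : Fin n,
          if m ≠ k then (ℙ {ω | X k ω ≤ X m ω ∧ Y k ω ≤ Y m ω}).toReal else 0) ^ 2
          + ∑ _e ∈ E, (2 * (n : ℝ) - 3) := by
        gcongr with e he
        · exact sum_nonneg fun e _ => integral_nonneg (comparabilityIndicator_nonneg e)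
        · exact sum_integral_comparabilityIndicator_le hXY
        · rw [SimpleGraph.card_filter_edgeFinset_top_meets he, Fintype.card_fin]
    _ = _ := by
        rw [sum_const, SimpleGraph.card_edgeFinset_top_eq_card_choose_two, Fintype.card_fin,
          nsmul_eq_mul, Nat.cast_choose_two]
        ring

/-- For independent random vectors `(X_1,Y_1), …, (X_n,Y_n)` with absolutely
continuous bivariate distributions (given by densities `f i`), with `I_{ji} = I(Y_{j,n} ≤ Y_{i,n})`
the concomitant comparison indicators (encoded by an a.s. sorting permutation `σ ω` of the
`X`-sample) and `p_{mk} = P(X_k ≤ X_m, Y_k ≤ Y_m)`, one has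
`E[(∑_{j<i} I_{ji})²] ≤ (∑_k ∑_{m≠k} p_{mk})² + n(n-1)/2 + n(n-1)(n-2)`. -/
theorem second_moment_concomitant_indicator_sum_bound
    {Ω : Type*} [MeasureSpace Ω] [IsProbabilityMeasure (ℙ : Measure Ω)]
    (n : ℕ)
    (X Y : Fin n → Ω → ℝ)
    (hXY : ∀ i, Measurable fun ω => (X i ω, Y i ω))
    (hindep : iIndepFun (fun i ω => (X i ω, Y i ω)) ℙ)
    (f : Fin n → ℝ × ℝ → ℝ)
    (hf_meas : ∀ i, Measurable (f i))
    (hf_nonneg : ∀ i p, 0 ≤ f i p)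
    (hlaw : ∀ i, Measure.map (fun ω => (X i ω, Y i ω)) ℙ
        = (volume : Measure (ℝ × ℝ)).withDensity fun p => ENNReal.ofReal (f i p))
    (σ : Ω → Equiv.Perm (Fin n))
    (hσ : ∀ᵐ ω ∂ℙ, StrictMono fun j : Fin n => X (σ ω j) ω) :
    ∫ ω, (∑ i : Fin n, ∑ j : Fin n,
        if j < i ∧ Y (σ ω j) ω ≤ Y (σ ω i) ω then (1 : ℝ) else 0) ^ 2 ∂ℙ
      ≤ (∑ k : Fin n, ∑ m : Fin n,
          if m ≠ k then (ℙ {ω | X k ω ≤ X m ω ∧ Y k ω ≤ Y m ω}).toReal else 0) ^ 2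
        + (n : ℝ) * ((n : ℝ) - 1) / 2 + (n : ℝ) * ((n : ℝ) - 1) * ((n : ℝ) - 2) :=
  second_moment_concomitant_indicator_sum_bound_general n X Y hXY hindep σ hσ
end
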